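/- arXiv:1803.06582 — 2 statements merged into one kernel-verified Lean document; each statement's English description precedes it below -/
import Mathlib

section
/- Fix R > 1 and real numbers s₁, s₂ and D ≥ 0 (representing d_Σ(θ₁,θ₂)). Define F(Θ) = √(|s₁-s₂|² + R²Θ²) + D - Θ for Θ ∈ [0, D]. If D ≤ |s₁-s₂| / (R√(R²-1)), then min_{Θ ∈ [0,D]} F(Θ) = √(|s₁-s₂|² + R²D²). Otherwise, min_{Θ ∈ [0,D]} F(Θ) = |s₁-s₂| · √(R²-1)/R + D, achieved at Θ₀ = |s₁-s₂| / (R√(R²-1)). -/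
open Set

/-!
Write `a = |s₁ - s₂|`, `c = √(R² - 1)` and `Θ₀ = a / (R c)`. Since `(1/R)² + (c/R)² = 1`,
Cauchy–Schwarz gives `Θ + a c / R ≤ √(a² + R²Θ²)` for every `Θ`, with equality at `Θ₀`; this is
the bound `F ≥ a c / R + D` when `Θ₀ ∈ [0, D]`. For `0 ≤ Θ ≤ Θ₀` one has `R²Θ ≤ √(a² + R²Θ²)`,
i.e. the slope of `Θ ↦ √(a² + R²Θ²)` is at most `1`, so `F` is antitone on `[0, Θ₀]` and, when
`D ≤ Θ₀`, attains its minimum on `[0, D]` at `D`.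
-/

lemma add_mul_le_sqrt_of_sq_add_sq_eq_one {u v p q : ℝ} (h : p ^ 2 + q ^ 2 = 1) :
    u * p + v * q ≤ √(u ^ 2 + v ^ 2) :=
  Real.le_sqrt_of_sq_le (by nlinarith [sq_nonneg (u * q - v * p)])

lemma sqrt_add_mul_sq_sub_sqrt_add_mul_sq_le {b c x y : ℝ} (hb : 0 ≤ b) (hc : 0 ≤ c)
    (hxy : x ≤ y) (hx : b * x ≤ √(c + b * x ^ 2)) (hy : b * y ≤ √(c + b * y ^ 2)) :
    √(c + b * y ^ 2) - √(c + b * x ^ 2) ≤ y - x := by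
  have hP := Real.sq_sqrt (show 0 ≤ c + b * x ^ 2 by positivity)
  have hQ := Real.sq_sqrt (show 0 ≤ c + b * y ^ 2 by positivity)
  have hP0 := Real.sqrt_nonneg (c + b * x ^ 2)
  set P := √(c + b * x ^ 2)
  set Q := √(c + b * y ^ 2)
  by_contra! h
  nlinarith [mul_le_mul_of_nonneg_left (add_le_add hx hy) (sub_nonneg.2 hxy)]

section Stretched

variable {a R c : ℝ}

lemma add_mul_div_le_sqrt_sq_add_sq_mul_sq (hR : 0 < R) (hcR : c ^ 2 = R ^ 2 - 1) (Θ : ℝ) :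
    Θ + a * c / R ≤ √(a ^ 2 + R ^ 2 * Θ ^ 2) := by
  calc Θ + a * c / R = a * (c / R) + R * Θ * (1 / R) := by field_simp; ring
    _ ≤ √(a ^ 2 + (R * Θ) ^ 2) := add_mul_le_sqrt_of_sq_add_sq_eq_one (by field_simp; linarith)
    _ = √(a ^ 2 + R ^ 2 * Θ ^ 2) := by rw [mul_pow]

lemma sqrt_sq_add_sq_mul_sq_div_sub_div (ha : 0 ≤ a) (hR : 0 < R) (hc : 0 < c)
    (hcR : c ^ 2 = R ^ 2 - 1) :
    √(a ^ 2 + R ^ 2 * (a / (R * c)) ^ 2) - a / (R * c) = a * c / R := by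
  have hsq : a ^ 2 + R ^ 2 * (a / (R * c)) ^ 2 = (a * R / c) ^ 2 := by
    field_simp
    linear_combination a ^ 2 * hcR
  rw [hsq, Real.sqrt_sq (by positivity)]
  field_simp
  linear_combination -a * hcR

lemma sq_mul_le_sqrt_sq_add_sq_mul_sq (hR : 0 < R) (hc : 0 < c) (hcR : c ^ 2 = R ^ 2 - 1)
    {x : ℝ} (hx : 0 ≤ x) (hxa : x ≤ a / (R * c)) :
    R ^ 2 * x ≤ √(a ^ 2 + R ^ 2 * x ^ 2) := by
  have hRcx : R * c * x ≤ a := by rwa [le_div_iff₀ (by positivity), mul_comm] at hxa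
  have hsq : (R * c * x) ^ 2 ≤ a ^ 2 := pow_le_pow_left₀ (by positivity) hRcx 2
  exact Real.le_sqrt_of_sq_le (by linear_combination hsq - R ^ 2 * x ^ 2 * hcR)

lemma antitoneOn_sqrt_sq_add_sq_mul_sq_add_sub (hR : 0 < R) (hc : 0 < c)
    (hcR : c ^ 2 = R ^ 2 - 1) (D : ℝ) :
    AntitoneOn (fun Θ => √(a ^ 2 + R ^ 2 * Θ ^ 2) + D - Θ) (Icc 0 (a / (R * c))) := by
  intro x ⟨hx0, hxa⟩ y ⟨hy0, hya⟩ hxy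
  have := sqrt_add_mul_sq_sub_sqrt_add_mul_sq_le (sq_nonneg R) (sq_nonneg a) hxy
    (sq_mul_le_sqrt_sq_add_sq_mul_sq hR hc hcR hx0 hxa)
    (sq_mul_le_sqrt_sq_add_sq_mul_sq hR hc hcR hy0 hya)
  dsimp only
  linarith

end Stretched

/-- location of the minimum of
`F(Θ) = √(|s₁-s₂|² + R²Θ²) + D - Θ` on `[0, D]`, the function defining the
minimized `R`-stretched Euclidean taxi metric. -/
theorem RET_minimum (R s₁ s₂ D : ℝ) (hR : 1 < R) (hD : 0 ≤ D) :
    (D ≤ |s₁ - s₂| / (R * Real.sqrt (R ^ 2 - 1)) →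
      IsLeast ((fun Θ => Real.sqrt (|s₁ - s₂| ^ 2 + R ^ 2 * Θ ^ 2) + D - Θ) '' Set.Icc 0 D)
        (Real.sqrt (|s₁ - s₂| ^ 2 + R ^ 2 * D ^ 2))) ∧
    (|s₁ - s₂| / (R * Real.sqrt (R ^ 2 - 1)) < D →
      IsLeast ((fun Θ => Real.sqrt (|s₁ - s₂| ^ 2 + R ^ 2 * Θ ^ 2) + D - Θ) '' Set.Icc 0 D)
        (|s₁ - s₂| * Real.sqrt (R ^ 2 - 1) / R + D) ∧
      Real.sqrt (|s₁ - s₂| ^ 2 + R ^ 2 * (|s₁ - s₂| / (R * Real.sqrt (R ^ 2 - 1))) ^ 2) + D -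
          |s₁ - s₂| / (R * Real.sqrt (R ^ 2 - 1)) =
        |s₁ - s₂| * Real.sqrt (R ^ 2 - 1) / R + D) := by
  have hR0 : 0 < R := by linarith
  have hc : 0 < √(R ^ 2 - 1) := Real.sqrt_pos.2 (by nlinarith)
  have hcR : √(R ^ 2 - 1) ^ 2 = R ^ 2 - 1 := Real.sq_sqrt (by nlinarith)
  have hval := sqrt_sq_add_sq_mul_sq_div_sub_div (abs_nonneg (s₁ - s₂)) hR0 hc hcR
  refine ⟨fun hDle => ?_, fun hlt => ⟨⟨⟨_, ⟨by positivity, hlt.le⟩, by dsimp only; linarith⟩, ?_⟩,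
    by linarith⟩⟩
  · have hF := ((antitoneOn_sqrt_sq_add_sq_mul_sq_add_sub hR0 hc hcR D).mono
      (Icc_subset_Icc_right hDle)).map_isGreatest (isGreatest_Icc hD)
    simpa using hF
  · rintro _ ⟨Θ, -, rfl⟩
    have := add_mul_div_le_sqrt_sq_add_sq_mul_sq (a := |s₁ - s₂|) hR0 hcR Θ
    dsimp only
    linarith
end

section
/- Let f_j, f_∞ : [r(0), r(1)] → ℝ be continuous and positive with ‖f_j - f_∞‖_{L²} ≤ δ. Let C(t) = (r(t), θ(t)) be an absolutely continuous curve monotone in r, parametrized by r, and set Θ(C) = (∫_{r(0)}^{r(1)} |θ'(r)|² dr)^{1/2}. Let L_j(C) = ∫ √(1 + f_j(r)²|θ'(r)|²) dr, and similarly L_∞(C). Then |L_j(C) - L_∞(C)| ≤ (∫|f_j+f_∞|² dr)^{1/4} (∫|f_j-f_∞|² dr)^{1/4} Θ(C). -/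
open MeasureTheory Set Real

lemma aux_abs_sqrt_sub_sqrt {x y : ℝ} (hx : 0 ≤ x) (hy : 0 ≤ y) :
    |Real.sqrt x - Real.sqrt y| ≤ Real.sqrt |x - y| := by
  wlog h : y ≤ x generalizing x y
  · rw [abs_sub_comm, abs_sub_comm x y]; exact this hy hx (le_of_not_ge h)
  rw [abs_of_nonneg (sub_nonneg.2 (Real.sqrt_le_sqrt h)),
    abs_of_nonneg (sub_nonneg.2 h)]
  have h2 : x ≤ (Real.sqrt (x - y) + Real.sqrt y) ^ 2 := by
    have e1 := Real.sq_sqrt (sub_nonneg.2 h)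
    have e2 := Real.sq_sqrt hy
    nlinarith [Real.sqrt_nonneg (x - y), Real.sqrt_nonneg y]
  have := (Real.sqrt_le_sqrt h2).trans_eq
    (Real.sqrt_sq (by positivity))
  linarith

lemma aux_cauchy_schwarz {μ : Measure ℝ} {f g : ℝ → ℝ} (hf0 : ∀ x, 0 ≤ f x)
    (hg0 : ∀ x, 0 ≤ g x) (hfm : AEStronglyMeasurable f μ)
    (hgm : AEStronglyMeasurable g μ)
    (hf2 : Integrable (fun x => f x ^ 2) μ) (hg2 : Integrable (fun x => g x ^ 2) μ) :
    ∫ x, f x * g x ∂μ ≤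
      (∫ x, f x ^ 2 ∂μ) ^ ((1:ℝ)/2) * (∫ x, g x ^ 2 ∂μ) ^ ((1:ℝ)/2) := by
  have hpq : Real.HolderConjugate 2 2 := by constructor <;> norm_num
  have h2 : ENNReal.ofReal (2:ℝ) = 2 := by norm_num
  have hfL : MemLp f (ENNReal.ofReal (2:ℝ)) μ := by
    rw [h2]; exact (memLp_two_iff_integrable_sq hfm).2 hf2
  have hgL : MemLp g (ENNReal.ofReal (2:ℝ)) μ := by
    rw [h2]; exact (memLp_two_iff_integrable_sq hgm).2 hg2
  have := integral_mul_le_Lp_mul_Lq_of_nonneg hpq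
    (Filter.Eventually.of_forall hf0) (Filter.Eventually.of_forall hg0) hfL hgL
  simpa [Real.rpow_two] using this

/-- for a curve monotone in `r` and parametrized by `r` over
`[a,b]`, the warped lengths with warping functions `f_j` and `f_∞` satisfy
`|L_j(C) - L_∞(C)| ≤ (∫|f_j+f_∞|²)^{1/4} (∫|f_j-f_∞|²)^{1/4} Θ(C)`, where
`Θ(C) = (∫ |θ'(r)|² dr)^{1/2}`. -/
theorem length_comparison_L2 {E : Type*} [NormedAddCommGroup E] [NormedSpace ℝ E]
    (a b : ℝ) (hab : a ≤ b) (fj finf : ℝ → ℝ)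
    (hcj : ContinuousOn fj (Set.Icc a b)) (hcinf : ContinuousOn finf (Set.Icc a b))
    (hposj : ∀ r ∈ Set.Icc a b, 0 < fj r) (hposinf : ∀ r ∈ Set.Icc a b, 0 < finf r)
    (θ : ℝ → E)
    (hintj : IntervalIntegrable
      (fun r => Real.sqrt (1 + fj r ^ 2 * ‖deriv θ r‖ ^ 2)) volume a b)
    (hintinf : IntervalIntegrable
      (fun r => Real.sqrt (1 + finf r ^ 2 * ‖deriv θ r‖ ^ 2)) volume a b)
    (hintθ : IntervalIntegrable (fun r => ‖deriv θ r‖ ^ 2) volume a b) :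
    |(∫ r in a..b, Real.sqrt (1 + fj r ^ 2 * ‖deriv θ r‖ ^ 2)) -
        ∫ r in a..b, Real.sqrt (1 + finf r ^ 2 * ‖deriv θ r‖ ^ 2)| ≤
      (∫ r in a..b, |fj r + finf r| ^ 2) ^ ((1:ℝ)/4) *
        (∫ r in a..b, |fj r - finf r| ^ 2) ^ ((1:ℝ)/4) *
          Real.sqrt (∫ r in a..b, ‖deriv θ r‖ ^ 2) := by
  set μ : Measure ℝ := volume.restrict (Set.Ioc a b) with hμ
  have hfinμ : IsFiniteMeasure μ := by
    constructor
    rw [hμ, Measure.restrict_apply_univ, Real.volume_Ioc]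
    exact ENNReal.ofReal_lt_top
  -- notations
  set k : ℝ → ℝ := fun r => ‖deriv θ r‖ with hk
  set F : ℝ → ℝ := fun r => Real.sqrt (1 + fj r ^ 2 * k r ^ 2) with hF
  set G : ℝ → ℝ := fun r => Real.sqrt (1 + finf r ^ 2 * k r ^ 2) with hG
  -- rewrite interval integrals as integrals over μ
  simp only [intervalIntegral.integral_of_le hab]
  -- integrability and measurability facts
  have hFi : Integrable F μ :=
    (intervalIntegrable_iff_integrableOn_Ioc_of_le hab).1 hintj
  have hGi : Integrable G μ :=
    (intervalIntegrable_iff_integrableOn_Ioc_of_le hab).1 hintinf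
  have hk2i : Integrable (fun r => k r ^ 2) μ :=
    (intervalIntegrable_iff_integrableOn_Ioc_of_le hab).1 hintθ
  have hkm : AEStronglyMeasurable k μ := by
    have h2 := hk2i.aestronglyMeasurable
    have := (Real.continuous_sqrt.comp_aestronglyMeasurable h2)
    refine this.congr (Filter.Eventually.of_forall fun r => ?_)
    simp [Real.sqrt_sq (norm_nonneg _)]
    exact Real.sqrt_sq (norm_nonneg _)
  have hcs : ContinuousOn (fun r => fj r + finf r) (Set.Icc a b) := hcj.add hcinf
  have hcd : ContinuousOn (fun r => fj r - finf r) (Set.Icc a b) := hcj.sub hcinf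
  have hsm : AEStronglyMeasurable (fun r => fj r + finf r) μ :=
    (hcs.mono Set.Ioc_subset_Icc_self).aestronglyMeasurable measurableSet_Ioc
  have hdm : AEStronglyMeasurable (fun r => fj r - finf r) μ :=
    (hcd.mono Set.Ioc_subset_Icc_self).aestronglyMeasurable measurableSet_Ioc
  have hs2i : Integrable (fun r => |fj r + finf r| ^ 2) μ :=
    (intervalIntegrable_iff_integrableOn_Ioc_of_le hab).1
      ((hcs.abs.pow 2).intervalIntegrable_of_Icc hab)
  have hd2i : Integrable (fun r => |fj r - finf r| ^ 2) μ :=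
    (intervalIntegrable_iff_integrableOn_Ioc_of_le hab).1
      ((hcd.abs.pow 2).intervalIntegrable_of_Icc hab)
  -- p := sqrt(|s||d|)
  set p : ℝ → ℝ := fun r => Real.sqrt (|fj r + finf r| * |fj r - finf r|) with hp
  have hpm : AEStronglyMeasurable p μ := by
    have : ContinuousOn p (Set.Icc a b) :=
      Real.continuous_sqrt.comp_continuousOn (hcs.abs.mul hcd.abs)
    exact (this.mono Set.Ioc_subset_Icc_self).aestronglyMeasurable measurableSet_Ioc
  have hp2 : ∀ r, p r ^ 2 = |fj r + finf r| * |fj r - finf r| := fun r =>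
    Real.sq_sqrt (by positivity)
  have hp2i : Integrable (fun r => p r ^ 2) μ := by
    have : ContinuousOn (fun r => p r ^ 2) (Set.Icc a b) := by
      simp only [hp2]; exact hcs.abs.mul hcd.abs
    exact (intervalIntegrable_iff_integrableOn_Ioc_of_le hab).1
      (this.intervalIntegrable_of_Icc hab)
  -- bound for p on Icc
  obtain ⟨M, hM⟩ := (isCompact_Icc.image_of_continuousOn
    (Real.continuous_sqrt.comp_continuousOn (hcs.abs.mul hcd.abs))).isBounded.subset_ball 0
  have hMb : ∀ r ∈ Set.Icc a b, p r ≤ M := by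
    intro r hr
    have := hM (Set.mem_image_of_mem _ hr)
    rw [Metric.mem_ball, Real.dist_eq, sub_zero] at this
    exact (le_abs_self _).trans this.le
  -- pk integrable
  have hpki : Integrable (fun r => p r * k r) μ := by
    refine Integrable.mono ((hk2i.add (integrable_const 1)).const_mul M) (hpm.mul hkm) ?_
    rw [hμ]
    rw [ae_restrict_iff' measurableSet_Ioc]
    refine Filter.Eventually.of_forall fun r hr => ?_
    have hpr : 0 ≤ p r := Real.sqrt_nonneg _
    have hkr : 0 ≤ k r := norm_nonneg _
    have hMr : p r ≤ M := hMb r (Set.Ioc_subset_Icc_self hr)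
    have hM0 : 0 ≤ M := hpr.trans hMr
    simp only [Pi.add_apply]
    rw [Real.norm_of_nonneg (mul_nonneg hpr hkr),
      Real.norm_of_nonneg (mul_nonneg hM0 (show (0:ℝ) ≤ k r ^ 2 + 1 by positivity))]
    have hkk : k r ≤ k r ^ 2 + 1 := by nlinarith
    calc p r * k r ≤ M * k r := by nlinarith
      _ ≤ M * (k r ^ 2 + 1) := by nlinarith
  -- pointwise bound
  have hpoint : ∀ r, |F r - G r| ≤ p r * k r := by
    intro r
    have h1 : |F r - G r| ≤
        Real.sqrt |(1 + fj r ^ 2 * k r ^ 2) - (1 + finf r ^ 2 * k r ^ 2)| :=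
      aux_abs_sqrt_sub_sqrt (by positivity) (by positivity)
    have h2 : |(1 + fj r ^ 2 * k r ^ 2) - (1 + finf r ^ 2 * k r ^ 2)| =
        (|fj r + finf r| * |fj r - finf r|) * k r ^ 2 := by
      rw [show (1 + fj r ^ 2 * k r ^ 2) - (1 + finf r ^ 2 * k r ^ 2) =
        ((fj r + finf r) * (fj r - finf r)) * k r ^ 2 by ring]
      rw [abs_mul, abs_mul, abs_of_nonneg (by positivity : (0:ℝ) ≤ k r ^ 2)]
    refine h1.trans_eq ?_
    rw [h2, Real.sqrt_mul (by positivity), Real.sqrt_sq (norm_nonneg _)]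
  -- step 1: |∫F - ∫G| ≤ ∫ p k
  have step1 : |(∫ r, F r ∂μ) - ∫ r, G r ∂μ| ≤ ∫ r, p r * k r ∂μ := by
    rw [← integral_sub hFi hGi]
    rw [← Real.norm_eq_abs]
    refine (norm_integral_le_integral_norm _).trans ?_
    simp only [Real.norm_eq_abs]
    exact integral_mono_of_nonneg (Filter.Eventually.of_forall fun r => abs_nonneg _)
      hpki (Filter.Eventually.of_forall fun r => hpoint r)
  -- step 2: Cauchy-Schwarz twice
  have step2 : ∫ r, p r * k r ∂μ ≤
      (∫ r, p r ^ 2 ∂μ) ^ ((1:ℝ)/2) * (∫ r, k r ^ 2 ∂μ) ^ ((1:ℝ)/2) :=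
    aux_cauchy_schwarz (fun r => Real.sqrt_nonneg _) (fun r => norm_nonneg _)
      hpm hkm hp2i hk2i
  have step3 : ∫ r, p r ^ 2 ∂μ ≤
      (∫ r, |fj r + finf r| ^ 2 ∂μ) ^ ((1:ℝ)/2) *
        (∫ r, |fj r - finf r| ^ 2 ∂μ) ^ ((1:ℝ)/2) := by
    have := aux_cauchy_schwarz (f := fun r => |fj r + finf r|)
      (g := fun r => |fj r - finf r|) (fun r => abs_nonneg _) (fun r => abs_nonneg _)
      ((hcs.abs.mono Set.Ioc_subset_Icc_self).aestronglyMeasurable measurableSet_Ioc)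
      ((hcd.abs.mono Set.Ioc_subset_Icc_self).aestronglyMeasurable measurableSet_Ioc) (by simpa using hs2i) (by simpa using hd2i)
    calc ∫ r, p r ^ 2 ∂μ = ∫ r, |fj r + finf r| * |fj r - finf r| ∂μ := by
          simp only [hp2]
      _ ≤ _ := this
  -- combine
  set X := ∫ r, |fj r + finf r| ^ 2 ∂μ with hX
  set Y := ∫ r, |fj r - finf r| ^ 2 ∂μ with hY
  set Z := ∫ r, k r ^ 2 ∂μ with hZ
  have hX0 : 0 ≤ X := integral_nonneg fun r => by positivity
  have hY0 : 0 ≤ Y := integral_nonneg fun r => by positivity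
  have hZ0 : 0 ≤ Z := integral_nonneg fun r => by positivity
  have hP0 : 0 ≤ ∫ r, p r ^ 2 ∂μ := integral_nonneg fun r => by positivity
  have hZh : Real.sqrt Z = Z ^ ((1:ℝ)/2) := Real.sqrt_eq_rpow Z
  have key : (∫ r, p r ^ 2 ∂μ) ^ ((1:ℝ)/2) ≤ X ^ ((1:ℝ)/4) * Y ^ ((1:ℝ)/4) := by
    have h1 : (∫ r, p r ^ 2 ∂μ) ^ ((1:ℝ)/2) ≤
        (X ^ ((1:ℝ)/2) * Y ^ ((1:ℝ)/2)) ^ ((1:ℝ)/2) :=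
      Real.rpow_le_rpow hP0 step3 (by norm_num)
    refine h1.trans_eq ?_
    rw [Real.mul_rpow (by positivity) (by positivity), ← Real.rpow_mul hX0,
      ← Real.rpow_mul hY0]
    norm_num
  calc |(∫ r, F r ∂μ) - ∫ r, G r ∂μ| ≤ ∫ r, p r * k r ∂μ := step1
    _ ≤ (∫ r, p r ^ 2 ∂μ) ^ ((1:ℝ)/2) * Z ^ ((1:ℝ)/2) := step2
    _ ≤ (X ^ ((1:ℝ)/4) * Y ^ ((1:ℝ)/4)) * Z ^ ((1:ℝ)/2) := by
        refine mul_le_mul_of_nonneg_right key (by positivity)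
    _ = X ^ ((1:ℝ)/4) * Y ^ ((1:ℝ)/4) * Real.sqrt Z := by rw [hZh]
end
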